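/- There exist FOUR-valued functions R₁, R₂ : ℕ → FOUR, each with finite support with respect to some FOUR-identity, such that the function R₃ : ℕ × ℕ → FOUR given by R₃(x, y) = R₁(x) ∧i R₂(y) does not have finite support with respect to any element α of FOUR; i.e., for every α ∈ FOUR, the set {(x,y) | R₃(x,y) ≠ α} is infinite. -/

import Mathlib

inductive Four where
  | fls | tru | unk | conf
  deriving DecidableEq

open Four

/-- Join in the truth order (fls ≤ unk, conf ≤ tru). -/
def tjoin : Four → Four → Four
  | fls, b => b
  | a, fls => a
  | tru, _ => tru
  | _, tru => tru
  | unk, unk => unk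
  | conf, conf => conf
  | _, _ => tru

/-- Meet in the truth order. -/
def tmeet : Four → Four → Four
  | tru, b => b
  | a, tru => a
  | fls, _ => fls
  | _, fls => fls
  | unk, unk => unk
  | conf, conf => conf
  | _, _ => fls

/-- Join in the information order (unk ≤ fls, tru ≤ conf). -/
def ijoin : Four → Four → Four
  | unk, b => b
  | a, unk => a
  | conf, _ => conf
  | _, conf => conf
  | fls, fls => fls
  | tru, tru => tru
  | _, _ => conf

/-- Meet in the information order. -/
def imeet : Four → Four → Four
  | conf, b => b
  | a, conf => a
  | unk, _ => unk
  | _, unk => unk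
  | fls, fls => fls
  | tru, tru => tru
  | _, _ => unk

/-- Truth order: fls ≤ unk, conf ≤ tru. -/
def letr (a b : Four) : Prop := a = fls ∨ b = tru ∨ a = b

/-- Information order: unk ≤ fls, tru ≤ conf. -/
def lein (a b : Four) : Prop := a = unk ∨ b = conf ∨ a = b

theorem imeet_conf_right (a : Four) : imeet a conf = a := by
  cases a <;> rfl

theorem Set.infinite_setOf_comp_fst_ne {α β γ : Type*} [Infinite γ] {f : α → β} {a₁ a₂ : α}
    (h : f a₁ ≠ f a₂) (b : β) : {p : α × γ | f p.1 ≠ b}.Infinite := by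
  have hne : (f ⁻¹' {b}ᶜ).Nonempty := by
    by_cases h₁ : f a₁ = b
    · exact ⟨a₂, fun h₂ => h (h₁.trans h₂.symm)⟩
    · exact ⟨a₁, h₁⟩
  exact ((Set.infinite_univ (α := γ)).prod_right hne).mono fun p hp => hp.1

/-- an information-meet of finitely supported FOUR-relations
need not be finitely supported w.r.t. any element of FOUR. -/
theorem imeet_not_finitely_supported :
    ∃ (R₁ R₂ : ℕ → Four),
      (∃ e₁ : Four, {n : ℕ | R₁ n ≠ e₁}.Finite) ∧
      (∃ e₂ : Four, {n : ℕ | R₂ n ≠ e₂}.Finite) ∧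
      ∀ α : Four, {p : ℕ × ℕ | imeet (R₁ p.1) (R₂ p.2) ≠ α}.Infinite := by
  refine ⟨fun n => if n = 0 then tru else unk, fun _ => conf, ⟨unk, ?_⟩, ⟨conf, by simp⟩, ?_⟩
  · refine (Set.finite_singleton 0).subset fun n hn => ?_
    by_contra h
    exact hn (if_neg h)
  · -- `conf` is the identity of `imeet`, so the meet is `R₁ x`, constant along each column `{x} × ℕ`.
    simp only [imeet_conf_right]
    exact Set.infinite_setOf_comp_fst_ne
      (f := fun n => if n = 0 then tru else unk) (a₁ := 0) (a₂ := 1) (by simp)
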